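/- arXiv:2202.08097 — 3 statements merged into one kernel-verified Lean document; each statement's English description precedes it below -/
import Mathlib

section
/- For any n-agent instance with monotone valuations and any integer 1 ≤ c ≤ n: if C is a uniformly random c-element subset of [n], and π is any full action sequence whose prefix of length c is a subsequence S' of agents in C maximizing ∑_{i∈C} v_i(S^i) over all orderings S of C, then E[SW(π)] ≥ (c/n)·SW(π̃), where π̃ is an optimal action sequence. That is, the randomized algorithm Rand achieves approximation ratio n/c in expectation. -/
/-- The agents that precede `i` in the action (sub)sequence `π`. -/
def prefixBefore {n : ℕ} (π : List (Fin n)) (i : Fin n) : List (Fin n) :=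
  π.takeWhile (fun j => j != i)

/-- A full action sequence: an ordering of all `n` agents. -/
def IsSeq {n : ℕ} (π : List (Fin n)) : Prop :=
  π.Nodup ∧ ∀ i : Fin n, i ∈ π

/-- Social welfare of a full action sequence. -/
noncomputable def SW {n : ℕ} (v : Fin n → List (Fin n) → ℝ) (π : List (Fin n)) : ℝ :=
  ∑ i : Fin n, v i (prefixBefore π i)

/-- Total value obtained by the agents of a subsequence acting in order. -/
noncomputable def valSum {n : ℕ} (v : Fin n → List (Fin n) → ℝ) (S : List (Fin n)) : ℝ :=
  (S.map fun i => v i (prefixBefore S i)).sum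

/-! For every `c`-subset `C`, the restriction of `πopt` to `C` is one ordering of `C`; deleting
the agents outside `C` only shortens prefixes, so by monotonicity and the optimality of the
first `c` actions of `π C`, the welfare of `π C` is at least `∑ i ∈ C, v i (prefixBefore πopt i)`.
Averaging over `C`, each agent lies in `C` for a `c / n` fraction of the subsets. -/

section Prefix

variable {n : ℕ}

lemma prefixBefore_append_of_mem {i : Fin n} {xs : List (Fin n)} (ys : List (Fin n))
    (hi : i ∈ xs) : prefixBefore (xs ++ ys) i = prefixBefore xs i := by
  induction xs with
  | nil => simp at hi
  | cons a xs ih =>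
    by_cases hai : a = i
    · simp [prefixBefore, hai]
    · have hi' : i ∈ xs := (List.mem_cons.1 hi).resolve_left (Ne.symm hai)
      simpa [prefixBefore, List.takeWhile_cons, hai] using ih hi'

lemma prefixBefore_take_of_mem {i : Fin n} {L : List (Fin n)} {c : ℕ} (hi : i ∈ L.take c) :
    prefixBefore (L.take c) i = prefixBefore L i := by
  conv_rhs => rw [← L.take_append_drop c]
  exact (prefixBefore_append_of_mem _ hi).symm

lemma prefixBefore_sublist_prefixBefore {i : Fin n} {T l : List (Fin n)}
    (h : T.Sublist l) (hl : l.Nodup) (hi : i ∈ T) :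
    (prefixBefore T i).Sublist (prefixBefore l i) := by
  induction h with
  | slnil => simp at hi
  | @cons T l a h ih =>
    have hai : a ≠ i := fun hai => (List.nodup_cons.1 hl).1 (hai ▸ h.subset hi)
    simpa [prefixBefore, List.takeWhile_cons, hai] using
      (ih (List.nodup_cons.1 hl).2 hi).trans (List.sublist_cons_self _ _)
  | @cons_cons T l a h ih =>
    by_cases hai : a = i
    · simp [prefixBefore, hai]
    · have hi' : i ∈ T := (List.mem_cons.1 hi).resolve_left (Ne.symm hai)
      simpa [prefixBefore, List.takeWhile_cons, hai] using
        (ih (List.nodup_cons.1 hl).2 hi').cons_cons a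

end Prefix

section Welfare

variable {n : ℕ} (v : Fin n → List (Fin n) → ℝ)

lemma valSum_eq_sum_toFinset {T : List (Fin n)} (hT : T.Nodup) :
    valSum v T = ∑ i ∈ T.toFinset, v i (prefixBefore T i) :=
  (List.sum_toFinset _ hT).symm

lemma sum_prefixBefore_le_valSum_of_sublist
    (hmono : ∀ (i : Fin n) (S S' : List (Fin n)), S'.Sublist S → v i S ≤ v i S')
    {T l : List (Fin n)} (h : T.Sublist l) (hl : l.Nodup) :
    ∑ i ∈ T.toFinset, v i (prefixBefore l i) ≤ valSum v T := by
  rw [valSum_eq_sum_toFinset v (hl.sublist h)]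
  refine Finset.sum_le_sum fun i hi => hmono i _ _ ?_
  exact prefixBefore_sublist_prefixBefore h hl (List.mem_toFinset.1 hi)

lemma valSum_take_le_SW (hnn : ∀ i S, 0 ≤ v i S) {π : List (Fin n)} (hπ : π.Nodup) (c : ℕ) :
    valSum v (π.take c) ≤ SW v π := by
  rw [valSum_eq_sum_toFinset v (hπ.sublist (π.take_sublist c)), SW]
  calc ∑ i ∈ (π.take c).toFinset, v i (prefixBefore (π.take c) i)
      = ∑ i ∈ (π.take c).toFinset, v i (prefixBefore π i) :=
        Finset.sum_congr rfl fun i hi => by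
          rw [prefixBefore_take_of_mem (List.mem_toFinset.1 hi)]
    _ ≤ ∑ i, v i (prefixBefore π i) :=
        Finset.sum_le_sum_of_subset_of_nonneg (Finset.subset_univ _) fun i _ _ => hnn i _

end Welfare

lemma card_filter_mem_powersetCard_univ {α : Type*} [Fintype α] [DecidableEq α] (a : α)
    {c : ℕ} (hc : 1 ≤ c) :
    ({C ∈ (Finset.univ : Finset α).powersetCard c | a ∈ C}).card
      = (Fintype.card α - 1).choose (c - 1) := by
  simpa using Finset.card_filter_powersetCard_subset {a} Finset.univ c (by simp) (by simpa)

lemma sum_powersetCard_univ_sum {α M : Type*} [Fintype α] [DecidableEq α] [AddCommMonoid M]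
    (f : α → M) {c : ℕ} (hc : 1 ≤ c) :
    ∑ C ∈ (Finset.univ : Finset α).powersetCard c, ∑ i ∈ C, f i
      = (Fintype.card α - 1).choose (c - 1) • ∑ i, f i := by
  rw [Finset.sum_comm' (t' := Finset.univ) (s' := fun i => {C ∈ Finset.univ.powersetCard c | i ∈ C})
    (by simp), Finset.smul_sum]
  simp only [Finset.sum_const, card_filter_mem_powersetCard_univ _ hc]

lemma Nat.mul_choose_eq_mul_choose_sub_one {n k : ℕ} (hk : 1 ≤ k) :
    k * n.choose k = n * (n - 1).choose (k - 1) := by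
  obtain ⟨k, rfl⟩ : ∃ j, k = j + 1 := ⟨k - 1, by omega⟩
  rcases n with _ | n
  · simp
  · simpa [mul_comm, add_comm] using (Nat.add_one_mul_choose_eq n k).symm

lemma sum_prefixBefore_le_SW_of_optimal_prefix {n c : ℕ} {v : Fin n → List (Fin n) → ℝ}
    (hnn : ∀ i S, 0 ≤ v i S)
    (hmono : ∀ (i : Fin n) (S S' : List (Fin n)), S'.Sublist S → v i S ≤ v i S')
    {σ π : List (Fin n)} (hσ : IsSeq σ) (hπ : π.Nodup) {C : Finset (Fin n)}
    (hbest : ∀ T : List (Fin n), T.Nodup → T.toFinset = C → valSum v T ≤ valSum v (π.take c)) :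
    ∑ i ∈ C, v i (prefixBefore σ i) ≤ SW v π := by
  have hrestrict : (σ.filter (· ∈ C)).toFinset = C := by
    ext i
    simp [hσ.2 i]
  calc ∑ i ∈ C, v i (prefixBefore σ i)
      ≤ valSum v (σ.filter (· ∈ C)) := by
        conv_lhs => rw [← hrestrict]
        exact sum_prefixBefore_le_valSum_of_sublist v hmono List.filter_sublist hσ.1
    _ ≤ valSum v (π.take c) := hbest _ (hσ.1.filter _) hrestrict
    _ ≤ SW v π := valSum_take_le_SW v hnn hπ c

theorem stmt1_general {n c : ℕ} (hc1 : 1 ≤ c) (hcn : c ≤ n)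
    (v : Fin n → List (Fin n) → ℝ)
    (hnn : ∀ i S, 0 ≤ v i S)
    (hmono : ∀ (i : Fin n) (S S' : List (Fin n)), S'.Sublist S → v i S ≤ v i S')
    (πopt : List (Fin n)) (hseq : IsSeq πopt)
    (π : Finset (Fin n) → List (Fin n))
    (hπ : ∀ C ∈ Finset.univ.powersetCard c, IsSeq (π C) ∧
        ((π C).take c).toFinset = C ∧
        ∀ T : List (Fin n), T.Nodup → T.toFinset = C →
          valSum v T ≤ valSum v ((π C).take c)) :
    (c : ℝ) / n * SW v πopt ≤
      (∑ C ∈ Finset.univ.powersetCard c, SW v (π C)) / (n.choose c) := by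
  have hcount : ((n - 1).choose (c - 1) : ℝ) * SW v πopt
      ≤ ∑ C ∈ Finset.univ.powersetCard c, SW v (π C) := by
    have hdouble := sum_powersetCard_univ_sum (fun i => v i (prefixBefore πopt i)) hc1
    rw [Fintype.card_fin, nsmul_eq_mul] at hdouble
    rw [SW, ← hdouble]
    exact Finset.sum_le_sum fun C hC =>
      sum_prefixBefore_le_SW_of_optimal_prefix hnn hmono hseq (hπ C hC).1.1 (hπ C hC).2.2
  have hchoose : (c : ℝ) * n.choose c = n * (n - 1).choose (c - 1) := by
    exact_mod_cast Nat.mul_choose_eq_mul_choose_sub_one hc1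
  have hn : (0 : ℝ) < n := by exact_mod_cast hc1.trans hcn
  rw [le_div_iff₀ (by exact_mod_cast Nat.choose_pos hcn)]
  calc (c : ℝ) / n * SW v πopt * n.choose c
      = (n - 1).choose (c - 1) * SW v πopt := by
        rw [div_mul_eq_mul_div, div_mul_eq_mul_div, div_eq_iff hn.ne']
        linear_combination SW v πopt * hchoose
    _ ≤ _ := hcount

/-- the Rand algorithm achieves an `n/c` approximation in expectation,
where the expectation over the uniformly random `c`-subset `C` is written as an
average over all `c`-element subsets of `[n]`. -/
theorem stmt1 {n c : ℕ} (hc1 : 1 ≤ c) (hcn : c ≤ n)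
    (v : Fin n → List (Fin n) → ℝ)
    (hnn : ∀ i S, 0 ≤ v i S)
    (hmono : ∀ (i : Fin n) (S S' : List (Fin n)), S'.Sublist S → v i S ≤ v i S')
    (πopt : List (Fin n)) (hseq : IsSeq πopt)
    (hopt : ∀ σ, IsSeq σ → SW v σ ≤ SW v πopt)
    (π : Finset (Fin n) → List (Fin n))
    (hπ : ∀ C ∈ Finset.univ.powersetCard c, IsSeq (π C) ∧
        ((π C).take c).toFinset = C ∧
        ∀ T : List (Fin n), T.Nodup → T.toFinset = C →
          valSum v T ≤ valSum v ((π C).take c)) :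
    (c : ℝ) / n * SW v πopt ≤
      (∑ C ∈ Finset.univ.powersetCard c, SW v (π C)) / (n.choose c) :=
  stmt1_general hc1 hcn v hnn hmono πopt hseq π hπ
end

section
/- Greedy selection gives a 2-approximation for OSM: let π be the action sequence built by iteratively appending the remaining agent i maximizing v_i(current prefix). Then 2·SW(π) ≥ SW(π̂) for every action sequence π̂. Key combinatorial fact: if M and M̂ are the perfect matchings produced by π and π̂ respectively, then for every agent i whose matched item differs between M and M̂, the edge e_i = (i, μ_i(π̂^i)) ∈ M̂ satisfies w(e_i) ≤ w(e_i^+) + w(e_i^-), where e_i^+ and e_i^- are the two edges of M incident to the endpoints of e_i. -/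
open Finset Function List

theorem weight_le_of_rank_le {α γ δ : Type*} [LinearOrder γ] [Preorder δ] {r : α → γ}
    (hr : Injective r) {w : α → δ} (hwr : ∀ j j', r j < r j' → w j' ≤ w j) {j j' : α}
    (h : r j ≤ r j') : w j' ≤ w j := by
  rcases h.lt_or_eq with h | h
  · exact hwr j j' h
  · rw [hr h]

theorem sum_perm_le_two_mul_sum_diag {ι : Type*} [Fintype ι] (M : ι → ι → ℝ)
    (hM0 : ∀ i, 0 ≤ M i i) (hM : ∀ i a, M i a ≤ max (M i i) (M a a)) (σ : Equiv.Perm ι) :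
    ∑ i, M i (σ i) ≤ 2 * ∑ i, M i i :=
  calc ∑ i, M i (σ i) ≤ ∑ i, (M i i + M (σ i) (σ i)) :=
        sum_le_sum fun i _ => (hM i (σ i)).trans (max_le_add_of_nonneg (hM0 i) (hM0 (σ i)))
    _ = 2 * ∑ i, M i i := by rw [sum_add_distrib, Equiv.sum_comp σ (fun a => M a a), two_mul]

namespace List

variable {α : Type*} {l : List α} {m k : ℕ}

theorem getElem_mem_drop_of_le (hmk : m ≤ k) (hk : k < l.length) : l[k] ∈ l.drop m :=
  mem_drop_iff_getElem.mpr ⟨k - m, by omega, by simp only [Nat.add_sub_cancel' hmk]⟩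

theorem Nodup.getElem_notMem_take_of_le (hl : l.Nodup) (hmk : m ≤ k) (hk : k < l.length) :
    l[k] ∉ l.take m :=
  fun h => disjoint_take_drop hl le_rfl h (getElem_mem_drop_of_le hmk hk)

end List

theorem prefixBefore_getElem {n : ℕ} {l : List (Fin n)} (hl : l.Nodup) {m : ℕ}
    (hm : m < l.length) : prefixBefore l l[m] = l.take m := by
  have hnot : l[m] ∉ l.take m := hl.getElem_notMem_take_of_le le_rfl hm
  set a := l[m]
  have hsplit : l = l.take m ++ a :: l.drop (m + 1) := by
    rw [← drop_eq_getElem_cons hm, take_append_drop]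
  unfold prefixBefore
  conv_lhs => rw [hsplit]
  rw [takeWhile_append_of_pos, takeWhile_cons_of_neg, append_nil]
  · simp
  · intro b hb
    simpa using ne_of_mem_of_not_mem hb hnot

section Allocation

variable {n : ℕ} {β : Type*} {μ : Fin n → List (Fin n) → β}

def allocation (μ : Fin n → List (Fin n) → β) (π : List (Fin n)) (i : Fin n) : β :=
  μ i (prefixBefore π i)

theorem allocation_getElem {π : List (Fin n)} (hπ : π.Nodup) {k : ℕ} (hk : k < π.length) :
    allocation μ π π[k] = μ π[k] (π.take k) := by
  rw [allocation, prefixBefore_getElem hπ hk]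

variable [DecidableEq β] {μset : List (Fin n) → Finset β}

def RecordsPicks (μ : Fin n → List (Fin n) → β) (μset : List (Fin n) → Finset β) : Prop :=
  ∀ (S : List (Fin n)) (i : Fin n), S.Nodup → i ∉ S → μset (S ++ [i]) = insert (μ i S) (μset S)

theorem RecordsPicks.take_mono (h : RecordsPicks μ μset) {l : List (Fin n)} (hl : l.Nodup)
    {k m : ℕ} (hkm : k ≤ m) : μset (l.take k) ⊆ μset (l.take m) := by
  induction m, hkm using Nat.le_induction with
  | base => exact subset_rfl
  | succ m _ ih =>
    refine ih.trans ?_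
    rcases lt_or_ge m l.length with hm | hm
    · rw [take_succ_eq_append_getElem hm,
        h _ _ ((take_sublist m l).nodup hl) (hl.getElem_notMem_take_of_le le_rfl hm)]
      exact subset_insert _ _
    · rw [take_of_length_le hm, take_of_length_le (by omega)]

theorem RecordsPicks.mem_take (h : RecordsPicks μ μset) {l : List (Fin n)} (hl : l.Nodup)
    {p q : ℕ} (hp : p < l.length) (hpq : p < q) : μ l[p] (l.take p) ∈ μset (l.take q) := by
  apply h.take_mono hl hpq
  rw [take_succ_eq_append_getElem hp,
    h _ _ ((take_sublist p l).nodup hl) (hl.getElem_notMem_take_of_le le_rfl hp)]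
  exact mem_insert_self _ _

theorem RecordsPicks.allocation_injective (h : RecordsPicks μ μset)
    (hfresh : ∀ i S, S.Nodup → i ∉ S → μ i S ∉ μset S) {π : List (Fin n)} (hπ : IsSeq π) :
    Injective (allocation μ π) := by
  have hne : ∀ p q (hp : p < π.length) (hq : q < π.length), p < q →
      allocation μ π π[p] ≠ allocation μ π π[q] := by
    intro p q hp hq hpq heq
    rw [allocation_getElem hπ.1, allocation_getElem hπ.1] at heq
    exact hfresh _ _ ((take_sublist q π).nodup hπ.1)
      (hπ.1.getElem_notMem_take_of_le le_rfl hq) (heq ▸ h.mem_take hπ.1 hp hpq)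
  intro i j hij
  obtain ⟨p, hp, rfl⟩ := getElem_of_mem (hπ.2 i)
  obtain ⟨q, hq, rfl⟩ := getElem_of_mem (hπ.2 j)
  rcases lt_trichotomy p q with hpq | rfl | hqp
  · exact absurd hij (hne p q hp hq hpq)
  · rfl
  · exact absurd hij.symm (hne q p hq hp hqp)

theorem RecordsPicks.weight_allocation_le_max (h : RecordsPicks μ μset) (w : Fin n → β → ℝ)
    (hfresh : ∀ i S, S.Nodup → i ∉ S → μ i S ∉ μset S)
    (hbest : ∀ i S, S.Nodup → i ∉ S → ∀ b ∉ μset S, w i b ≤ w i (μ i S))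
    {π : List (Fin n)} (hπ : IsSeq π)
    (hgreedy : ∀ (k : ℕ) (hk : k < π.length), ∀ j ∈ π.drop k,
        w j (μ j (π.take k)) ≤ w π[k] (μ π[k] (π.take k)))
    (i a : Fin n) :
    w i (allocation μ π a) ≤ max (w i (allocation μ π i)) (w a (allocation μ π a)) := by
  obtain ⟨k, hk, rfl⟩ := getElem_of_mem (hπ.2 i)
  obtain ⟨m, hm, rfl⟩ := getElem_of_mem (hπ.2 a)
  rw [allocation_getElem hπ.1 hk, allocation_getElem hπ.1 hm]
  have hfree : μ π[m] (π.take m) ∉ μset (π.take m) :=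
    hfresh _ _ ((take_sublist m π).nodup hπ.1) (hπ.1.getElem_notMem_take_of_le le_rfl hm)
  rcases le_or_gt k m with hkm | hmk
  · exact le_max_of_le_left <| hbest _ _ ((take_sublist k π).nodup hπ.1)
      (hπ.1.getElem_notMem_take_of_le le_rfl hk) _ fun hx => hfree (h.take_mono hπ.1 hkm hx)
  · exact le_max_of_le_right <| (hbest _ _ ((take_sublist m π).nodup hπ.1)
      (hπ.1.getElem_notMem_take_of_le hmk.le hk) _ hfree).trans
      (hgreedy m hm _ (getElem_mem_drop_of_le hmk.le hk))

end Allocation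

theorem stmt6_general {n : ℕ}
    (r : Fin n → Fin n → ℕ) (hr : ∀ i, Function.Injective (r i))
    (w : Fin n → Fin n → ℝ) (hw0 : ∀ i j, 0 ≤ w i j)
    (hwr : ∀ i j j', r i j < r i j' → w i j' ≤ w i j)
    (μ : Fin n → List (Fin n) → Fin n) (μset : List (Fin n) → Finset (Fin n))
    (hsetS : ∀ (S : List (Fin n)) (i : Fin n), S.Nodup → i ∉ S →
        μset (S ++ [i]) = insert (μ i S) (μset S))
    (hμ : ∀ (i : Fin n) (S : List (Fin n)), S.Nodup → i ∉ S →
        μ i S ∉ μset S ∧ ∀ j, j ∉ μset S → r i (μ i S) ≤ r i j)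
    (v : Fin n → List (Fin n) → ℝ) (hv : ∀ i S, v i S = w i (μ i S))
    (π : List (Fin n)) (hπ : IsSeq π)
    (hgreedy : ∀ (k : ℕ) (hk : k < π.length), ∀ j ∈ π.drop k,
        v j (π.take k) ≤ v (π.get ⟨k, hk⟩) (π.take k)) :
    ∀ πhat, IsSeq πhat → SW v πhat ≤ 2 * SW v π := by
  intro πhat hπhat
  obtain rfl : v = fun i S => w i (μ i S) := funext₂ hv
  have hrec : RecordsPicks μ μset := hsetS
  have hfresh : ∀ i S, S.Nodup → i ∉ S → μ i S ∉ μset S := fun i S hS hi => (hμ i S hS hi).1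
  have hbest : ∀ i S, S.Nodup → i ∉ S → ∀ b ∉ μset S, w i b ≤ w i (μ i S) :=
    fun i S hS hi b hb => weight_le_of_rank_le (hr i) (hwr i) ((hμ i S hS hi).2 b hb)
  set g := allocation μ π
  have hg : Bijective g := Finite.injective_iff_bijective.mp (hrec.allocation_injective hfresh hπ)
  have hf : Bijective (allocation μ πhat) :=
    Finite.injective_iff_bijective.mp (hrec.allocation_injective hfresh hπhat)
  let σ : Equiv.Perm (Fin n) := (Equiv.ofBijective _ hf).trans (Equiv.ofBijective g hg).symm
  have hgσ : ∀ i, g (σ i) = allocation μ πhat i := fun i =>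
    (Equiv.ofBijective g hg).apply_symm_apply _
  have hexchange := hrec.weight_allocation_le_max w hfresh hbest hπ
    (by simpa only [get_eq_getElem] using hgreedy)
  have key := sum_perm_le_two_mul_sum_diag (fun i a => w i (g a)) (fun i => hw0 _ _) hexchange σ
  simp only [hgσ] at key
  exact key

/-- greedy selection is a 2-approximation for OSM. The OSM structure is
given by `μ` (item picked) and `μset` (set of picked items) as in the monotonicity
lemma; `v i S = w i (μ i S)`. The sequence `π` is greedy: the agent placed at each
position `k` has maximum value, after the length-`k` prefix, among all agents placed
at positions `≥ k`. Conclusion: `SW π̂ ≤ 2 ⬝ SW π` for every action sequence `π̂`. -/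
theorem stmt6 {n : ℕ}
    (r : Fin n → Fin n → ℕ) (hr : ∀ i, Function.Injective (r i))
    (w : Fin n → Fin n → ℝ) (hw0 : ∀ i j, 0 ≤ w i j)
    (hwr : ∀ i j j', r i j < r i j' → w i j' ≤ w i j)
    (μ : Fin n → List (Fin n) → Fin n) (μset : List (Fin n) → Finset (Fin n))
    (hset0 : μset [] = ∅)
    (hsetS : ∀ (S : List (Fin n)) (i : Fin n), S.Nodup → i ∉ S →
        μset (S ++ [i]) = insert (μ i S) (μset S))
    (hμ : ∀ (i : Fin n) (S : List (Fin n)), S.Nodup → i ∉ S →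
        μ i S ∉ μset S ∧ ∀ j, j ∉ μset S → r i (μ i S) ≤ r i j)
    (v : Fin n → List (Fin n) → ℝ) (hv : ∀ i S, v i S = w i (μ i S))
    (π : List (Fin n)) (hπ : IsSeq π)
    (hgreedy : ∀ (k : ℕ) (hk : k < π.length), ∀ j ∈ π.drop k,
        v j (π.take k) ≤ v (π.get ⟨k, hk⟩) (π.take k)) :
    ∀ πhat, IsSeq πhat → SW v πhat ≤ 2 * SW v π :=
  stmt6_general r hr w hw0 hwr μ μset hsetS hμ v hv π hπ hgreedy
end

section
/- In any bipartite matching instance with nonnegative edge weights and strict rankings consistent with the weights, there exists a maximum-weight perfect matching that is Pareto-optimal with respect to the rankings; consequently (by the Pareto characterization of serial-dictatorship-producible matchings), the price of serial dictatorship of maximum-weight perfect matching is 1: some action sequence produces a maximum-weight perfect matching. -/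
/-- The serial dictatorship with ordering `π` produces the perfect matching `μ`. -/
def ProducedM {n : ℕ} (r : Fin n → Fin n → ℕ) (π : List (Fin n))
    (μ : Equiv.Perm (Fin n)) : Prop :=
  ∀ i j : Fin n, j ∉ (prefixBefore π i).map (fun k => μ k) → r i (μ i) ≤ r i j

/-- `μ` is Pareto-optimal w.r.t. the strict rankings `r`. -/
def ParetoOptM {n : ℕ} (r : Fin n → Fin n → ℕ) (μ : Equiv.Perm (Fin n)) : Prop :=
  ¬ ∃ μ' : Equiv.Perm (Fin n),
      (∀ i, r i (μ' i) ≤ r i (μ i)) ∧ ∃ i, r i (μ' i) < r i (μ i)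

namespace Function

theorem exists_iterate_mem_periodicPts {α : Type*} [Finite α] (f : α → α) (x : α) :
    ∃ k, f^[k] x ∈ periodicPts f := by
  obtain ⟨a, b, hab, heq⟩ := Finite.exists_ne_map_eq_of_infinite (fun k : ℕ => f^[k] x)
  wlog hlt : a < b generalizing a b
  · exact this b a hab.symm heq.symm (by omega)
  refine ⟨a, mk_mem_periodicPts (Nat.sub_pos_of_lt hlt) ?_⟩
  rw [IsPeriodicPt, IsFixedPt, ← iterate_add_apply, Nat.sub_add_cancel hlt.le]
  exact heq.symm

theorem exists_perm_eqOn_periodicPts {α : Type*} (f : α → α) :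
    ∃ σ : Equiv.Perm α, (∀ x ∈ periodicPts f, σ x = f x) ∧ ∀ x ∉ periodicPts f, σ x = x := by
  classical
  refine ⟨Equiv.Perm.ofSubtype ((bijOn_periodicPts f).equiv f), fun x hx => ?_,
    fun x hx => Equiv.Perm.ofSubtype_apply_of_not_mem _ hx⟩
  rw [Equiv.Perm.ofSubtype_apply_of_mem _ hx]
  rfl

end Function

section SerialDictatorship

variable {n : ℕ} {r : Fin n → Fin n → ℕ} {μ : Equiv.Perm (Fin n)}

theorem prefixBefore_cons_of_ne {i j : Fin n} (h : i ≠ j) (l : List (Fin n)) :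
    prefixBefore (i :: l) j = i :: prefixBefore l j := by
  simp [prefixBefore, h]

theorem ParetoOptM.exists_forall_le (hμ : ParetoOptM r μ) {S : Finset (Fin n)}
    (hS : S.Nonempty) : ∃ i ∈ S, ∀ j ∈ S, r i (μ i) ≤ r i (μ j) := by
  classical
  by_contra! henvy
  obtain ⟨s₀, hs₀⟩ := hS
  choose! g hgS hg using henvy
  -- sending the agents outside `S` into `S` puts every periodic point of `f` in `S`
  set f : Fin n → Fin n := fun i => if i ∈ S then g i else s₀
  have hfS : ∀ i, f i ∈ S := fun i => by
    by_cases hi : i ∈ S <;> simp [f, hi, hgS, hs₀]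
  have hf : ∀ i ∈ S, r i (μ (f i)) < r i (μ i) := fun i hi => by
    simpa [f, hi] using hg i hi
  have hcycleS : ∀ x ∈ Function.periodicPts f, x ∈ S := fun x hx => by
    obtain ⟨y, rfl⟩ := Function.periodicPts_subset_range hx
    exact hfS y
  obtain ⟨σ, hσf, hσid⟩ := Function.exists_perm_eqOn_periodicPts f
  obtain ⟨k, hk⟩ := Function.exists_iterate_mem_periodicPts f s₀
  refine hμ ⟨σ.trans μ, fun i => ?_, f^[k] s₀, ?_⟩
  · by_cases hi : i ∈ Function.periodicPts f
    · simpa [hσf i hi] using (hf i (hcycleS i hi)).le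
    · simp [hσid i hi]
  · simpa [hσf _ hk] using hf _ (hcycleS _ hk)

theorem ParetoOptM.exists_serialOrder (hμ : ParetoOptM r μ) (S : Finset (Fin n)) :
    ∃ l : List (Fin n), l.Nodup ∧ (∀ a, a ∈ l ↔ a ∈ S) ∧
      ∀ i ∈ l, ∀ k ∈ S, k ∉ prefixBefore l i → r i (μ i) ≤ r i (μ k) := by
  classical
  induction S using Finset.strongInduction with
  | H S ih =>
  rcases S.eq_empty_or_nonempty with rfl | hS
  · exact ⟨[], List.nodup_nil, by simp, by simp⟩
  obtain ⟨i, hiS, hi⟩ := hμ.exists_forall_le hS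
  obtain ⟨l, hnodup, hmem, hl⟩ := ih (S.erase i) (Finset.erase_ssubset hiS)
  refine ⟨i :: l, List.nodup_cons.mpr ⟨by simp [hmem], hnodup⟩, fun a => ?_, ?_⟩
  · simp only [List.mem_cons, hmem, Finset.mem_erase]
    by_cases hai : a = i <;> simp [hai, hiS]
  · rintro j hj k hkS hk
    rcases List.mem_cons.mp hj with rfl | hjl
    · exact hi k hkS
    have hij : i ≠ j := fun h => by simp [hmem, h] at hjl
    rw [prefixBefore_cons_of_ne hij, List.mem_cons, not_or] at hk
    exact hl j hjl k (Finset.mem_erase.mpr ⟨hk.1, hkS⟩) hk.2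

theorem ParetoOptM.exists_producedM (hμ : ParetoOptM r μ) : ∃ π, IsSeq π ∧ ProducedM r π μ := by
  obtain ⟨l, hnodup, hmem, hl⟩ := hμ.exists_serialOrder Finset.univ
  refine ⟨l, ⟨hnodup, fun i => (hmem i).mpr (Finset.mem_univ i)⟩, fun i j hj => ?_⟩
  have hk : μ.symm j ∉ prefixBefore l i := fun h =>
    hj (List.mem_map.mpr ⟨_, h, μ.apply_symm_apply j⟩)
  simpa using hl i ((hmem i).mpr (Finset.mem_univ i)) _ (Finset.mem_univ _) hk

end SerialDictatorship

theorem sum_weight_le_of_rank_le {ι α : Type*} [Fintype ι] {w : ι → α → ℝ} {r : ι → α → ℕ}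
    (hr : ∀ i, Function.Injective (r i)) (hwr : ∀ i j j', r i j < r i j' → w i j' ≤ w i j)
    {f g : ι → α} (hfg : ∀ i, r i (f i) ≤ r i (g i)) : ∑ i, w i (g i) ≤ ∑ i, w i (f i) :=
  Finset.sum_le_sum fun i _ =>
    (hfg i).lt_or_eq.elim (hwr i _ _) fun h => (congrArg (w i) (hr i h)).ge

theorem exists_maxWeight_paretoOptM {n : ℕ} (w : Fin n → Fin n → ℝ) (r : Fin n → Fin n → ℕ)
    (hr : ∀ i, Function.Injective (r i)) (hwr : ∀ i j j', r i j < r i j' → w i j' ≤ w i j) :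
    ∃ μ : Equiv.Perm (Fin n),
      (∀ μ' : Equiv.Perm (Fin n), ∑ i, w i (μ' i) ≤ ∑ i, w i (μ i)) ∧ ParetoOptM r μ := by
  classical
  set maxWeight := Finset.univ.filter fun μ : Equiv.Perm (Fin n) =>
    ∀ μ' : Equiv.Perm (Fin n), ∑ i, w i (μ' i) ≤ ∑ i, w i (μ i)
  have hne : maxWeight.Nonempty := by
    obtain ⟨μ, -, hμ⟩ := Finset.exists_max_image Finset.univ
      (fun μ : Equiv.Perm (Fin n) => ∑ i, w i (μ i)) Finset.univ_nonempty
    exact ⟨μ, by simpa [maxWeight] using hμ⟩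
  obtain ⟨μ, hμmax, hμmin⟩ := Finset.exists_min_image maxWeight (fun μ => ∑ i, r i (μ i)) hne
  simp only [maxWeight, Finset.mem_filter, Finset.mem_univ, true_and] at hμmax hμmin
  refine ⟨μ, hμmax, fun ⟨μ', hle, i₀, hlt⟩ => ?_⟩
  have hμ'max : ∀ ν : Equiv.Perm (Fin n), ∑ i, w i (ν i) ≤ ∑ i, w i (μ' i) := fun ν =>
    (hμmax ν).trans (sum_weight_le_of_rank_le hr hwr hle)
  have hrank : ∑ i, r i (μ' i) < ∑ i, r i (μ i) :=
    Finset.sum_lt_sum (fun i _ => hle i) ⟨i₀, Finset.mem_univ i₀, hlt⟩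
  exact (hμmin μ' hμ'max).not_gt hrank

theorem stmt12_general {n : ℕ} (w : Fin n → Fin n → ℝ)
    (r : Fin n → Fin n → ℕ) (hr : ∀ i, Function.Injective (r i))
    (hwr : ∀ i j j', r i j < r i j' → w i j' ≤ w i j) :
    ∃ μ : Equiv.Perm (Fin n),
      (∀ μ' : Equiv.Perm (Fin n), ∑ i, w i (μ' i) ≤ ∑ i, w i (μ i)) ∧
      ParetoOptM r μ ∧ ∃ π, IsSeq π ∧ ProducedM r π μ := by
  obtain ⟨μ, hmax, hpareto⟩ := exists_maxWeight_paretoOptM w r hr hwr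
  exact ⟨μ, hmax, hpareto, hpareto.exists_producedM⟩

/-- with rankings consistent with the nonnegative weights, there is a
maximum-weight perfect matching that is Pareto-optimal, and hence producible by a
serial dictatorship: the price of serial dictatorship of maximum-weight perfect
matching is 1. -/
theorem stmt12 {n : ℕ} (w : Fin n → Fin n → ℝ) (hw0 : ∀ i j, 0 ≤ w i j)
    (r : Fin n → Fin n → ℕ) (hr : ∀ i, Function.Injective (r i))
    (hwr : ∀ i j j', r i j < r i j' → w i j' ≤ w i j) :
    ∃ μ : Equiv.Perm (Fin n),
      (∀ μ' : Equiv.Perm (Fin n), ∑ i, w i (μ' i) ≤ ∑ i, w i (μ i)) ∧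
      ParetoOptM r μ ∧ ∃ π, IsSeq π ∧ ProducedM r π μ :=
  stmt12_general w r hr hwr
end
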